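/- Let φ = (1+√5)/2, let J = diag(1,1,1,1,−φ) as a 5×5 real matrix, and let K ⊆ ℝ be the subfield ℚ(√5). There exists ε > 0 such that for every g ∈ GL(5,ℝ) with gᵀ·J·g = J and all entries of g in K, and every real number λ > 1 that is an eigenvalue of g (det(g − λ·I) = 0) and is an algebraic integer (integral over ℤ), one has λ ≥ 1 + ε. That is, the integral real eigenvalues greater than 1 of matrices in O(f, ℚ(√5)) are bounded away from 1. -/

import Mathlib

open Matrix

set_option synthInstance.maxHeartbeats 1000000
set_option maxHeartbeats 1600000
set_option linter.unusedVariables false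


open Matrix Polynomial IntermediateField

noncomputable section

/-- The golden ratio `φ = (1+√5)/2`. -/
noncomputable def goldenPhi : ℝ := (1 + Real.sqrt 5) / 2

/-- The Gram matrix `diag(1,1,1,1,-φ)` of the quadratic form `f = ⟨1,1,1,1,-φ⟩`. -/
noncomputable def Jphi : Matrix (Fin 5) (Fin 5) ℝ :=
  Matrix.diagonal ![1, 1, 1, 1, -goldenPhi]

/-- The field `ℚ(√5)`, i.e. the smallest subfield of `ℝ` containing `√5`. -/
noncomputable def Qsqrt5 : Subfield ℝ := Subfield.closure {Real.sqrt 5}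

lemma sqrt5_mem : Real.sqrt 5 ∈ Qsqrt5 := Subfield.subset_closure rfl

lemma sqrt5_isIntegral : IsIntegral ℚ (Real.sqrt 5) := by
  refine ⟨X^2 - C 5, monic_X_pow_sub_C _ (by norm_num), ?_⟩
  have : Real.sqrt 5 ^ 2 = 5 := Real.sq_sqrt (by norm_num)
  simp [this]

noncomputable def Efield : IntermediateField ℚ ℝ := ℚ⟮Real.sqrt 5⟯

instance : FiniteDimensional ℚ Efield :=
  IntermediateField.adjoin.finiteDimensional sqrt5_isIntegral

noncomputable def Ffield (lam : ℝ) : IntermediateField Efield ℝ :=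
  IntermediateField.adjoin Efield {lam}

lemma finrank_E_le : Module.finrank ℚ Efield ≤ 2 := by
  have h : Module.finrank ℚ Efield = (minpoly ℚ (Real.sqrt 5)).natDegree :=
    IntermediateField.adjoin.finrank sqrt5_isIntegral
  rw [h]
  have hdvd : minpoly ℚ (Real.sqrt 5) ∣ X^2 - C 5 := by
    apply minpoly.dvd
    have : Real.sqrt 5 ^ 2 = 5 := Real.sq_sqrt (by norm_num)
    simp [this]
  have hne : (X^2 - C (5:ℚ)) ≠ 0 := by
    intro h0
    have := congrArg natDegree h0
    rw [natDegree_X_pow_sub_C] at this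
    simp at this
  calc (minpoly ℚ (Real.sqrt 5)).natDegree ≤ (X^2 - C (5:ℚ)).natDegree :=
        natDegree_le_of_dvd hdvd hne
    _ = 2 := natDegree_X_pow_sub_C

lemma Qsqrt5_le_E : ∀ x ∈ Qsqrt5, x ∈ Efield := by
  intro x hx
  have : Qsqrt5 ≤ Efield.toSubfield := by
    apply Subfield.closure_le.2
    rintro y rfl
    exact IntermediateField.mem_adjoin_simple_self ℚ (Real.sqrt 5)
  exact this hx

lemma Qsqrt5_le_F (lam : ℝ) : ∀ x ∈ Qsqrt5, x ∈ Ffield lam := by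
  intro x hx
  have hE : x ∈ Efield := Qsqrt5_le_E x hx
  have := IntermediateField.algebraMap_mem (Ffield lam) (⟨x, hE⟩ : Efield)
  simpa using this

end

noncomputable section
open Matrix Polynomial IntermediateField

lemma charpoly_eval' {R : Type*} [CommRing R] {n : Type*} [Fintype n] [DecidableEq n]
    (M : Matrix n n R) (t : R) :
    M.charpoly.eval t = (t • (1 : Matrix n n R) - M).det := by
  rw [Matrix.charpoly, ← Polynomial.coe_evalRingHom, RingHom.map_det]
  congr 1
  ext i j
  by_cases hij : i = j <;>
    simp [Matrix.charmatrix_apply, hij, Matrix.diagonal_apply, Matrix.one_apply]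

section Main

variable {g : Matrix (Fin 5) (Fin 5) ℝ} (hQ : ∀ i j, g i j ∈ Qsqrt5)
variable {lam : ℝ} (hdet : (g - lam • 1).det = 0)

/-- the matrix `g`, viewed over `Efield`. -/
def gE (hQ : ∀ i j, g i j ∈ Qsqrt5) : Matrix (Fin 5) (Fin 5) Efield :=
  fun i j => ⟨g i j, Qsqrt5_le_E _ (hQ i j)⟩

lemma gE_map : (gE hQ).map (algebraMap Efield ℝ) = g := by
  ext i j
  simp [gE, Matrix.map_apply, IntermediateField.algebraMap_apply]

include hQ hdet in
lemma lam_isIntegral_E : IsIntegral Efield lam := by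
  refine ⟨(gE hQ).charpoly, (gE hQ).charpoly_monic, ?_⟩
  have h1 : ((gE hQ).charpoly).eval₂ (algebraMap Efield ℝ) lam
      = (g.charpoly).eval lam := by
    rw [eval₂_eq_eval_map, ← Matrix.charpoly_map, gE_map]
  rw [h1, charpoly_eval', ← neg_sub g (lam • 1), Matrix.det_neg, hdet]
  simp

include hQ hdet in
lemma finrank_F_le : Module.finrank ℚ (Ffield lam) ≤ 10 := by
  haveI hFD : FiniteDimensional Efield (Ffield lam) :=
    IntermediateField.adjoin.finiteDimensional (lam_isIntegral_E hQ hdet)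
  have h1 : Module.finrank Efield (Ffield lam) = (minpoly Efield lam).natDegree :=
    IntermediateField.adjoin.finrank (lam_isIntegral_E hQ hdet)
  have h2 : (minpoly Efield lam).natDegree ≤ 5 := by
    have hdvd : minpoly Efield lam ∣ (gE hQ).charpoly := by
      apply minpoly.dvd
      have h1 : ((gE hQ).charpoly).eval₂ (algebraMap Efield ℝ) lam
          = (g.charpoly).eval lam := by
        rw [eval₂_eq_eval_map, ← Matrix.charpoly_map, gE_map]
      show ((gE hQ).charpoly).eval₂ (algebraMap Efield ℝ) lam = 0
      rw [h1, charpoly_eval', ← neg_sub g (lam • 1), Matrix.det_neg, hdet]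
      simp
    calc (minpoly Efield lam).natDegree ≤ ((gE hQ).charpoly).natDegree :=
          natDegree_le_of_dvd hdvd (gE hQ).charpoly_monic.ne_zero
      _ = 5 := by rw [Matrix.charpoly_natDegree_eq_dim, Fintype.card_fin]
  have h3 : Module.finrank ℚ Efield * Module.finrank Efield (Ffield lam)
      = Module.finrank ℚ (Ffield lam) := Module.finrank_mul_finrank ℚ Efield (Ffield lam)
  rw [← h3, h1]
  calc Module.finrank ℚ Efield * (minpoly Efield lam).natDegree ≤ 2 * 5 :=
        Nat.mul_le_mul finrank_E_le h2
    _ = 10 := rfl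

end Main
end

noncomputable section
open Matrix Polynomial IntermediateField Complex

lemma goldenPhi_mem : goldenPhi ∈ Qsqrt5 := by
  unfold goldenPhi
  exact Subfield.div_mem _ (Subfield.add_mem _ (Subfield.one_mem _) sqrt5_mem)
    (by exact_mod_cast Subfield.add_mem _ (Subfield.one_mem Qsqrt5) (Subfield.one_mem Qsqrt5))

def gFm (g : Matrix (Fin 5) (Fin 5) ℝ) (hQ : ∀ i j, g i j ∈ Qsqrt5) (lam : ℝ) :
    Matrix (Fin 5) (Fin 5) (Ffield lam) :=
  fun i j => ⟨g i j, Qsqrt5_le_F lam _ (hQ i j)⟩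

def phiF (lam : ℝ) : Ffield lam := ⟨goldenPhi, Qsqrt5_le_F lam _ goldenPhi_mem⟩

def lamF (lam : ℝ) : Ffield lam := ⟨lam, mem_adjoin_simple_self Efield lam⟩

def JFm (lam : ℝ) : Matrix (Fin 5) (Fin 5) (Ffield lam) :=
  Matrix.diagonal ![1, 1, 1, 1, -phiF lam]

section Main2

variable {g : Matrix (Fin 5) (Fin 5) ℝ} (hQ : ∀ i j, g i j ∈ Qsqrt5) {lam : ℝ}

lemma gFm_map : (gFm g hQ lam).map (algebraMap (Ffield lam) ℝ) = g := by
  ext i j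
  simp [gFm, Matrix.map_apply, IntermediateField.algebraMap_apply]

lemma JFm_map : (JFm lam).map (algebraMap (Ffield lam) ℝ) = Jphi := by
  ext i j
  rcases eq_or_ne i j with rfl | hij
  · rw [Matrix.map_apply, JFm, Jphi, Matrix.diagonal_apply_eq, Matrix.diagonal_apply_eq]
    fin_cases i <;> simp [phiF, IntermediateField.algebraMap_apply]
  · simp [JFm, Jphi, Matrix.map_apply, Matrix.diagonal_apply_ne _ hij]

include hQ in
lemma gFm_rel (hrel : gᵀ * Jphi * g = Jphi) :
    (gFm g hQ lam)ᵀ * JFm lam * gFm g hQ lam = JFm lam := by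
  have hmm : ((gFm g hQ lam)ᵀ * JFm lam * gFm g hQ lam).map (algebraMap (Ffield lam) ℝ)
      = (JFm lam).map (algebraMap (Ffield lam) ℝ) := by
    rw [Matrix.map_mul, Matrix.map_mul, Matrix.transpose_map, gFm_map, JFm_map, hrel]
  ext i j
  have h2 := congrFun (congrFun hmm i) j
  simpa [Matrix.map_apply, IntermediateField.algebraMap_apply] using h2

include hQ in
lemma gFm_det (hdet : (g - lam • 1).det = 0) :
    (gFm g hQ lam - lamF lam • 1).det = 0 := by
  apply (algebraMap (Ffield lam) ℝ).injective
  rw [RingHom.map_det, RingHom.mapMatrix_apply, map_zero]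
  have h1 : (gFm g hQ lam - lamF lam • 1).map (algebraMap (Ffield lam) ℝ)
      = g - lam • 1 := by
    ext i j
    by_cases hij : i = j <;>
      simp [gFm, lamF, Matrix.map_apply, Matrix.sub_apply, Matrix.smul_apply,
        Matrix.one_apply, hij, IntermediateField.algebraMap_apply]
  rw [h1, hdet]

/-- the inclusion of `Qsqrt5` in `Ffield lam`. -/
def inclQ (lam : ℝ) : Qsqrt5 →+* Ffield lam where
  toFun := fun y => ⟨y.1, Qsqrt5_le_F lam _ y.2⟩
  map_one' := rfl
  map_mul' := fun _ _ => rfl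
  map_zero' := rfl
  map_add' := fun _ _ => rfl

end Main2
end

noncomputable section
open Matrix Polynomial IntermediateField Complex

/-- `Qsqrt5` is generated, as an abstract field, by `√5`. -/
lemma Qsqrt5_closure_top :
    Subfield.closure {(⟨Real.sqrt 5, sqrt5_mem⟩ : Qsqrt5)} = (⊤ : Subfield Qsqrt5) := by
  rw [eq_top_iff]
  intro x _
  have hmap : Subfield.closure {Real.sqrt 5} ≤
      (Subfield.closure {(⟨Real.sqrt 5, sqrt5_mem⟩ : Qsqrt5)}).map Qsqrt5.subtype := by
    apply Subfield.closure_le.2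
    rintro y rfl
    exact ⟨⟨Real.sqrt 5, sqrt5_mem⟩, Subfield.subset_closure rfl, rfl⟩
  have hx : (x : ℝ) ∈
      (Subfield.closure {(⟨Real.sqrt 5, sqrt5_mem⟩ : Qsqrt5)}).map Qsqrt5.subtype :=
    hmap x.2
  obtain ⟨y, hy, hyx⟩ := hx
  have : y = x := Subtype.ext hyx
  rwa [this] at hy
end

open Matrix Complex

noncomputable section

/-- Hermitian pairing attached to a complex diagonal matrix. -/
def herm (D : Matrix (Fin 5) (Fin 5) ℂ) (x y : Fin 5 → ℂ) : ℂ :=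
  star x ⬝ᵥ (D *ᵥ y)

lemma herm_invariant {h D : Matrix (Fin 5) (Fin 5) ℂ}
    (hreal : ∀ i j, (starRingEnd ℂ) (h i j) = h i j)
    (hrel : hᵀ * D * h = D) (x y : Fin 5 → ℂ) :
    herm D (h *ᵥ x) (h *ᵥ y) = herm D x y := by
  have hH : hᴴ = hᵀ := by
    ext i j; simp [conjTranspose_apply, hreal]
  unfold herm
  rw [star_mulVec, hH, mulVec_mulVec, dotProduct_mulVec, vecMul_vecMul,
    ← Matrix.mul_assoc, hrel, ← dotProduct_mulVec]

lemma herm_smul_left (D : Matrix (Fin 5) (Fin 5) ℂ) (a : ℂ) (x y : Fin 5 → ℂ) :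
    herm D (a • x) y = (starRingEnd ℂ) a * herm D x y := by
  unfold herm
  rw [star_smul, smul_dotProduct]
  rfl

lemma herm_smul_right (D : Matrix (Fin 5) (Fin 5) ℂ) (a : ℂ) (x y : Fin 5 → ℂ) :
    herm D x (a • y) = a * herm D x y := by
  unfold herm
  rw [mulVec_smul, dotProduct_smul]
  rfl

lemma herm_sub_left (D : Matrix (Fin 5) (Fin 5) ℂ) (x y z : Fin 5 → ℂ) :
    herm D (x - y) z = herm D x z - herm D y z := by
  unfold herm
  rw [star_sub, sub_dotProduct]

lemma herm_sub_right (D : Matrix (Fin 5) (Fin 5) ℂ) (x y z : Fin 5 → ℂ) :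
    herm D x (y - z) = herm D x y - herm D x z := by
  unfold herm
  rw [mulVec_sub, dotProduct_sub]

/-- value of the hermitian form on the diagonal. -/
lemma herm_self (d : Fin 5 → ℝ) (x : Fin 5 → ℂ) :
    herm (Matrix.diagonal fun i => (d i : ℂ)) x x
      = ((∑ i, d i * Complex.normSq (x i) : ℝ) : ℂ) := by
  unfold herm
  rw [dotProduct]
  push_cast
  refine Finset.sum_congr rfl fun i _ => ?_
  rw [mulVec_diagonal]
  have : star x i * (↑(d i) * x i) = ↑(d i) * ((starRingEnd ℂ) (x i) * x i) := by
    simp only [Pi.star_apply, Complex.star_def]; ring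
  rw [this, ← Complex.normSq_eq_conj_mul_self]

end

noncomputable section
open Matrix Complex

lemma exists_eigenvec {h : Matrix (Fin 5) (Fin 5) ℂ} {μ : ℂ}
    (hdet : (h - μ • 1).det = 0) : ∃ v, v ≠ 0 ∧ h *ᵥ v = μ • v := by
  obtain ⟨v, hv0, hv⟩ := Matrix.exists_mulVec_eq_zero_iff.2 hdet
  refine ⟨v, hv0, ?_⟩
  rwa [sub_mulVec, smul_mulVec, one_mulVec, sub_eq_zero] at hv

lemma herm_vanish {h : Matrix (Fin 5) (Fin 5) ℂ} {d : Fin 5 → ℝ}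
    (hreal : ∀ i j, (starRingEnd ℂ) (h i j) = h i j)
    (hrel : hᵀ * (Matrix.diagonal fun i => (d i : ℂ)) * h
          = Matrix.diagonal fun i => (d i : ℂ))
    {a b : ℂ} {x y : Fin 5 → ℂ} (hx : h *ᵥ x = a • x) (hy : h *ᵥ y = b • y)
    (hab : ‖a‖ * ‖b‖ ≠ 1) :
    herm (Matrix.diagonal fun i => (d i : ℂ)) x y = 0 := by
  set D := Matrix.diagonal fun i => (d i : ℂ) with hD
  have h1 := herm_invariant hreal hrel x y
  rw [hx, hy, herm_smul_left, herm_smul_right] at h1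
  have h2 : (1 - (starRingEnd ℂ) a * b) * herm D x y = 0 := by
    linear_combination -h1
  rcases mul_eq_zero.1 h2 with h3 | h3
  · exfalso
    apply hab
    have : (starRingEnd ℂ) a * b = 1 := by linear_combination -h3
    calc ‖a‖ * ‖b‖ = ‖(starRingEnd ℂ) a * b‖ := by
          rw [norm_mul, RingHomIsometric.norm_map]
      _ = 1 := by rw [this, norm_one]
  · exact h3

lemma vec_eq_zero_of_herm_self {d : Fin 5 → ℝ}
    (hdpos : ∀ i, i ≠ 4 → 0 < d i) {x : Fin 5 → ℂ} (hx4 : x 4 = 0)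
    (hxx : herm (Matrix.diagonal fun i => (d i : ℂ)) x x = 0) : x = 0 := by
  rw [herm_self] at hxx
  have hsum : (∑ i, d i * Complex.normSq (x i)) = 0 := by exact_mod_cast hxx
  have hterm : ∀ i ∈ Finset.univ, 0 ≤ d i * Complex.normSq (x i) := by
    intro i _
    by_cases hi : i = 4
    · subst hi; rw [hx4]; simp
    · exact mul_nonneg (hdpos i hi).le (Complex.normSq_nonneg _)
  have hzero := (Finset.sum_eq_zero_iff_of_nonneg hterm).1 hsum
  funext i
  by_cases hi : i = 4
  · subst hi; exact hx4
  · have := hzero i (Finset.mem_univ i)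
    have h2 : Complex.normSq (x i) = 0 := by
      rcases mul_eq_zero.1 this with h | h
      · exact absurd h (hdpos i hi).ne'
      · exact h
    exact Complex.normSq_eq_zero.1 h2

/-- Indefinite case: signature `(4,1)` diagonal form. Any eigenvalue of a real
matrix preserving it is bounded by a given real eigenvalue `lam > 1`. -/
lemma norm_le_of_indefinite {h : Matrix (Fin 5) (Fin 5) ℂ} {d : Fin 5 → ℝ}
    (hd4 : d 4 < 0) (hdpos : ∀ i, i ≠ 4 → 0 < d i)
    (hreal : ∀ i j, (starRingEnd ℂ) (h i j) = h i j)
    (hrel : hᵀ * (Matrix.diagonal fun i => (d i : ℂ)) * h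
          = Matrix.diagonal fun i => (d i : ℂ))
    {lam : ℝ} (hlam : 1 < lam) (hlamdet : (h - (lam : ℂ) • 1).det = 0)
    {μ : ℂ} (hdet : (h - μ • 1).det = 0) : ‖μ‖ ≤ lam := by
  by_contra hgt
  push_neg at hgt
  obtain ⟨u, hu0, hu⟩ := exists_eigenvec hlamdet
  obtain ⟨v, hv0, hv⟩ := exists_eigenvec hdet
  set D := Matrix.diagonal fun i => (d i : ℂ) with hD
  have hnl : ‖(lam : ℂ)‖ = lam := by
    rw [Complex.norm_real, Real.norm_eq_abs, abs_of_pos (lt_trans one_pos hlam)]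
  have hlpos : (0:ℝ) < lam := lt_trans one_pos hlam
  have huu : herm D u u = 0 := by
    refine herm_vanish hreal hrel hu hu ?_
    rw [hnl]; nlinarith
  have hvv : herm D v v = 0 := by
    refine herm_vanish hreal hrel hv hv ?_
    nlinarith [norm_nonneg μ]
  have huv : herm D u v = 0 := by
    refine herm_vanish hreal hrel hu hv ?_
    rw [hnl]; nlinarith [norm_nonneg μ]
  have hvu : herm D v u = 0 := by
    refine herm_vanish hreal hrel hv hu ?_
    rw [hnl]; nlinarith [norm_nonneg μ]
  -- the last coordinates of `u` and `v` are nonzero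
  have hcoord : ∀ x : Fin 5 → ℂ, x ≠ 0 → herm D x x = 0 → x 4 ≠ 0 := by
    intro x hx0 hxx hx4
    exact hx0 (vec_eq_zero_of_herm_self hdpos hx4 hxx)
  have hu4 := hcoord u hu0 huu
  have hv4 := hcoord v hv0 hvv
  set w : Fin 5 → ℂ := v 4 • u - u 4 • v with hw
  have hw4 : w 4 = 0 := by simp [hw]; ring
  have hww : herm D w w = 0 := by
    rw [hw, herm_sub_left, herm_sub_right, herm_sub_right,
      herm_smul_left, herm_smul_left, herm_smul_left, herm_smul_left,
      herm_smul_right, herm_smul_right, herm_smul_right, herm_smul_right,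
      huu, hvv, huv, hvu]
    ring
  have hwzero : w = 0 := vec_eq_zero_of_herm_self hdpos hw4 hww
  have hveq : v 4 • u = u 4 • v := sub_eq_zero.1 hwzero
  have h1 : v 4 • ((lam : ℂ) • u) = u 4 • (μ • v) := by
    rw [← hu, ← hv, ← Matrix.mulVec_smul, ← Matrix.mulVec_smul, hveq]
  have h2 : v 4 • ((lam : ℂ) • u) = u 4 • ((lam : ℂ) • v) := by
    rw [smul_comm, hveq, smul_comm]
  have h3 : (u 4 * (μ - (lam : ℂ))) • v = 0 := by
    have hh : u 4 • (μ • v) = u 4 • ((lam : ℂ) • v) := h1.symm.trans h2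
    funext i
    have := congrFun hh i
    simp only [Pi.smul_apply, smul_eq_mul, Pi.zero_apply] at this ⊢
    linear_combination this
  rcases smul_eq_zero.1 h3 with h4 | h4
  · rcases mul_eq_zero.1 h4 with h5 | h5
    · exact hu4 h5
    · have : μ = (lam : ℂ) := by linear_combination h5
      rw [this, hnl] at hgt
      exact lt_irrefl _ hgt
  · exact hv0 h4

/-- Definite case: eigenvalues of a real matrix preserving a positive definite
diagonal form have norm one. -/
lemma norm_eq_one_of_definite {h : Matrix (Fin 5) (Fin 5) ℂ} {d : Fin 5 → ℝ}
    (hd : ∀ i, 0 < d i)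
    (hreal : ∀ i j, (starRingEnd ℂ) (h i j) = h i j)
    (hrel : hᵀ * (Matrix.diagonal fun i => (d i : ℂ)) * h
          = Matrix.diagonal fun i => (d i : ℂ))
    {μ : ℂ} (hdet : (h - μ • 1).det = 0) : ‖μ‖ = 1 := by
  obtain ⟨v, hv0, hv⟩ := exists_eigenvec hdet
  set D := Matrix.diagonal fun i => (d i : ℂ) with hD
  have h1 := herm_invariant hreal hrel v v
  rw [hv, herm_smul_left, herm_smul_right] at h1
  have hself := herm_self d v
  have hpos : 0 < ∑ i, d i * Complex.normSq (v i) := by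
    obtain ⟨i, hi⟩ := Function.ne_iff.1 hv0
    refine Finset.sum_pos' (fun j _ => mul_nonneg (hd j).le (Complex.normSq_nonneg _))
      ⟨i, Finset.mem_univ i, ?_⟩
    have : 0 < Complex.normSq (v i) := by
      rw [Complex.normSq_pos]; exact hi
    exact mul_pos (hd i) this
  have hne : herm D v v ≠ 0 := by
    rw [hself]
    exact_mod_cast hpos.ne'
  have h2 : ((starRingEnd ℂ) μ * μ - 1) * herm D v v = 0 := by
    linear_combination h1
  have h3 : (starRingEnd ℂ) μ * μ = 1 := by
    rcases mul_eq_zero.1 h2 with h | h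
    · linear_combination h
    · exact absurd h hne
  have h4 : (Complex.normSq μ : ℂ) = 1 := by
    rw [← Complex.normSq_eq_conj_mul_self] at h3
    exact h3
  have h5 : Complex.normSq μ = 1 := by exact_mod_cast h4
  have := Complex.normSq_eq_norm_sq μ
  rw [h5] at this
  have habs : ‖μ‖ = 1 := by nlinarith [norm_nonneg μ]
  exact habs

end

noncomputable section
open Matrix Polynomial IntermediateField Complex

lemma vec_last_neg (c : ℝ) (hc : 0 < c) : (![1, 1, 1, 1, -c] : Fin 5 → ℝ) 4 < 0 := by
  simpa using hc

lemma vec_pos_of_ne (c : ℝ) (hc : 0 < c) :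
    ∀ i : Fin 5, i ≠ 4 → 0 < (![1, 1, 1, 1, -c] : Fin 5 → ℝ) i := by
  intro i hi
  fin_cases i
  · norm_num
  · norm_num
  · norm_num
  · norm_num
  · exact absurd rfl hi

lemma vec_pos_all (c : ℝ) (hc : 0 < c) :
    ∀ i : Fin 5, 0 < (![1, 1, 1, 1, c] : Fin 5 → ℝ) i := by
  intro i
  fin_cases i
  · norm_num
  · norm_num
  · norm_num
  · norm_num
  · simpa using hc

section Phi
variable {g : Matrix (Fin 5) (Fin 5) ℝ} (hQ : ∀ i j, g i j ∈ Qsqrt5) {lam : ℝ}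

include hQ in
lemma norm_phi_le (hrel : gᵀ * Jphi * g = Jphi) (hlam : 1 < lam)
    (hdet : (g - lam • 1).det = 0) (φ : Ffield lam →+* ℂ) :
    ‖φ (lamF lam)‖ ≤ lam := by
  classical
  let ρ : Qsqrt5 →+* ℂ := φ.comp (inclQ lam)
  let s5Q : Qsqrt5 := ⟨Real.sqrt 5, sqrt5_mem⟩
  let hC : Matrix (Fin 5) (Fin 5) ℂ := (gFm g hQ lam).map φ
  have hCrel : hCᵀ * ((JFm lam).map φ) * hC = (JFm lam).map φ := by
    show ((gFm g hQ lam).map φ)ᵀ * _ * _ = _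
    rw [← Matrix.transpose_map, ← Matrix.map_mul, ← Matrix.map_mul, gFm_rel hQ hrel]
  have hCdet : (hC - φ (lamF lam) • 1).det = 0 := by
    have h1 : (gFm g hQ lam - lamF lam • 1).map φ = hC - φ (lamF lam) • 1 := by
      ext i j
      rcases eq_or_ne i j with rfl | hij
      · simp [hC, Matrix.map_apply, Matrix.sub_apply, Matrix.smul_apply, Matrix.one_apply]
      · simp [hC, Matrix.map_apply, Matrix.sub_apply, Matrix.smul_apply, Matrix.one_apply, hij]
    rw [← h1, ← RingHom.mapMatrix_apply, ← RingHom.map_det, gFm_det hQ hdet, map_zero]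
  have hentry : ∀ i j, hC i j = ρ ⟨g i j, hQ i j⟩ := fun i j => rfl
  have hφphi : φ (phiF lam) = ρ ⟨goldenPhi, goldenPhi_mem⟩ := rfl
  have hsq : (ρ s5Q) ^ 2 = 5 := by
    have h5 : s5Q ^ 2 = (5 : Qsqrt5) := by
      apply Subtype.ext
      push_cast
      exact Real.sq_sqrt (by norm_num)
    rw [← map_pow, h5]
    exact _root_.map_ofNat ρ 5
  have h5C : ((Real.sqrt 5 : ℝ) : ℂ) ^ 2 = 5 := by
    rw [← Complex.ofReal_pow, Real.sq_sqrt (by norm_num : (0:ℝ) ≤ 5)]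
    norm_num
  have hs5 : ρ s5Q = ((Real.sqrt 5 : ℝ) : ℂ) ∨ ρ s5Q = -((Real.sqrt 5 : ℝ) : ℂ) := by
    have hfac : (ρ s5Q - ((Real.sqrt 5 : ℝ) : ℂ)) * (ρ s5Q + ((Real.sqrt 5 : ℝ) : ℂ)) = 0 := by
      linear_combination hsq - h5C
    rcases mul_eq_zero.1 hfac with h | h
    · left; linear_combination h
    · right; linear_combination h
  have hgold : 0 < goldenPhi := by
    have := Real.sqrt_nonneg 5
    unfold goldenPhi; linarith
  rcases hs5 with hcase | hcase
  · -- `φ` restricts to the identity on `ℚ(√5)`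
    have hρeq : ρ = Complex.ofRealHom.comp Qsqrt5.subtype := by
      apply RingHom.eq_of_eqOn_of_field_closure_eq_top Qsqrt5_closure_top
      rintro y hy
      rw [Set.mem_singleton_iff] at hy; subst hy
      simpa using hcase
    have hg : ∀ i j, hC i j = ((g i j : ℝ) : ℂ) := by
      intro i j; rw [hentry, hρeq]; rfl
    have hφphi' : φ (phiF lam) = ((goldenPhi : ℝ) : ℂ) := by
      rw [hφphi, hρeq]; rfl
    have hJC : (JFm lam).map φ
        = Matrix.diagonal (fun i => ((![1, 1, 1, 1, -goldenPhi] : Fin 5 → ℝ) i : ℂ)) := by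
      ext i j
      rcases eq_or_ne i j with rfl | hij
      · rw [Matrix.map_apply, JFm, Matrix.diagonal_apply_eq, Matrix.diagonal_apply_eq]
        fin_cases i <;> simp [hφphi']
      · simp [JFm, Matrix.map_apply, Matrix.diagonal_apply_ne _ hij]
    have hreal : ∀ i j, (starRingEnd ℂ) (hC i j) = hC i j := by
      intro i j; rw [hg]; exact Complex.conj_ofReal _
    have hlamdetC : (hC - ((lam : ℝ) : ℂ) • 1).det = 0 := by
      have hgm : hC = g.map Complex.ofRealHom := by
        ext i j; rw [hg]; rfl
      have h1 : (g - lam • 1).map Complex.ofRealHom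
          = g.map Complex.ofRealHom - ((lam : ℝ) : ℂ) • 1 := by
        ext i j
        rcases eq_or_ne i j with rfl | hij
        · simp [Matrix.map_apply, Matrix.sub_apply, Matrix.smul_apply, Matrix.one_apply]
        · simp [Matrix.map_apply, Matrix.sub_apply, Matrix.smul_apply, Matrix.one_apply, hij]
      rw [hgm, ← h1, ← RingHom.mapMatrix_apply, ← RingHom.map_det, hdet, map_zero]
    rw [hJC] at hCrel
    exact norm_le_of_indefinite (vec_last_neg _ hgold) (vec_pos_of_ne _ hgold)
      hreal hCrel hlam hlamdetC hCdet
  · -- `φ` restricts to the Galois conjugation on `ℚ(√5)`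
    have hρreal : ∀ y : Qsqrt5, ρ y ∈ Complex.ofRealHom.fieldRange := by
      have hS : Subfield.closure {s5Q} ≤ Subfield.comap ρ Complex.ofRealHom.fieldRange := by
        apply Subfield.closure_le.2
        rintro y hy
        rw [Set.mem_singleton_iff] at hy; subst hy
        show s5Q ∈ Subfield.comap ρ Complex.ofRealHom.fieldRange
        rw [Subfield.mem_comap, hcase]
        exact ⟨-Real.sqrt 5, by simp⟩
      intro y
      have hy : y ∈ (⊤ : Subfield Qsqrt5) := trivial
      rw [← Qsqrt5_closure_top] at hy
      exact Subfield.mem_comap.1 (hS hy)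
    have hphiQ : (⟨goldenPhi, goldenPhi_mem⟩ : Qsqrt5) = (1 + s5Q) / 2 := by
      apply Subtype.ext
      push_cast
      rfl
    have h2 : ρ 2 = 2 := by exact_mod_cast _root_.map_ofNat ρ 2
    have hφphi' : φ (phiF lam) = (((1 - Real.sqrt 5) / 2 : ℝ) : ℂ) := by
      rw [hφphi, hphiQ, map_div₀, map_add, _root_.map_one, h2, hcase]
      push_cast
      ring
    have hJC : (JFm lam).map φ
        = Matrix.diagonal
          (fun i => ((![1, 1, 1, 1, (Real.sqrt 5 - 1) / 2] : Fin 5 → ℝ) i : ℂ)) := by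
      ext i j
      rcases eq_or_ne i j with rfl | hij
      · rw [Matrix.map_apply, JFm, Matrix.diagonal_apply_eq, Matrix.diagonal_apply_eq]
        fin_cases i <;> simp [hφphi'] <;> push_cast <;> ring
      · simp [JFm, Matrix.map_apply, Matrix.diagonal_apply_ne _ hij]
    have hreal : ∀ i j, (starRingEnd ℂ) (hC i j) = hC i j := by
      intro i j
      obtain ⟨r, hr⟩ := RingHom.mem_fieldRange.1 (hρreal ⟨g i j, hQ i j⟩)
      rw [hentry, ← hr]
      exact Complex.conj_ofReal _
    have hs5gt : 1 < Real.sqrt 5 := by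
      have h1 : (1:ℝ) = Real.sqrt 1 := (Real.sqrt_one).symm
      rw [h1]
      exact Real.sqrt_lt_sqrt (by norm_num) (by norm_num)
    have hdpos : 0 < (Real.sqrt 5 - 1) / 2 := by linarith
    rw [hJC] at hCrel
    have h1 : ‖φ (lamF lam)‖ = 1 :=
      norm_eq_one_of_definite (vec_pos_all _ hdpos) hreal hCrel hCdet
    rw [h1]
    linarith

end Phi
end

noncomputable section
open Matrix Polynomial IntermediateField Module

section Bound
variable {g : Matrix (Fin 5) (Fin 5) ℝ} (hQ : ∀ i j, g i j ∈ Qsqrt5) {lam : ℝ}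

include hQ in
lemma minpoly_bdd (hrel : gᵀ * Jphi * g = Jphi) (hlam : 1 < lam) (hlam2 : lam ≤ 2)
    (hdet : (g - lam • 1).det = 0) (hint : IsIntegral ℤ lam) :
    (minpoly ℤ lam).natDegree ≤ 10 ∧ ∀ i, |(minpoly ℤ lam).coeff i| ≤ 258048 := by
  haveI hFD1 : FiniteDimensional Efield (Ffield lam) :=
    IntermediateField.adjoin.finiteDimensional (lam_isIntegral_E hQ hdet)
  haveI hFD : FiniteDimensional ℚ (Ffield lam) := FiniteDimensional.trans ℚ Efield (Ffield lam)
  haveI : NumberField (Ffield lam) := ⟨⟩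
  have hrk : finrank ℚ (Ffield lam) ≤ 10 := finrank_F_le hQ hdet
  have halg : algebraMap (Ffield lam) ℝ (lamF lam) = lam := rfl
  have hminQ : minpoly ℚ (lamF lam) = minpoly ℚ lam := by
    have h := minpoly.algebraMap_eq (A := ℚ) (algebraMap (Ffield lam) ℝ).injective (lamF lam)
    rw [halg] at h
    exact h.symm
  have hZQ : minpoly ℚ lam = (minpoly ℤ lam).map (algebraMap ℤ ℚ) :=
    minpoly.isIntegrallyClosed_eq_field_fractions' ℚ hint
  have hφ : ∀ φ : Ffield lam →+* ℂ, ‖φ (lamF lam)‖ ≤ 2 :=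
    fun φ => le_trans (norm_phi_le hQ hrel hlam hdet φ) hlam2
  have hcoeff := fun i => NumberField.Embeddings.coeff_bdd_of_norm_le hφ i
  have hCb : max (2:ℝ) 1 ^ (finrank ℚ (Ffield lam)) *
      (finrank ℚ (Ffield lam)).choose ((finrank ℚ (Ffield lam)) / 2) ≤ 258048 := by
    have h21 : max (2:ℝ) 1 = 2 := by norm_num
    rw [h21]
    set n := finrank ℚ (Ffield lam) with hn
    clear_value n
    interval_cases n <;> norm_num [Nat.choose]
  constructor
  · have h1 : (minpoly ℚ (lamF lam)).natDegree ≤ finrank ℚ (Ffield lam) :=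
      minpoly.natDegree_le _
    rw [hminQ, hZQ, (minpoly.monic hint).natDegree_map (algebraMap ℤ ℚ)] at h1
    exact le_trans h1 hrk
  · intro i
    have h2 := hcoeff i
    rw [hminQ, hZQ, coeff_map] at h2
    have h3 : ‖algebraMap ℤ ℚ ((minpoly ℤ lam).coeff i)‖ ≤ 258048 := le_trans h2 hCb
    rw [eq_intCast, Int.norm_cast_rat, Int.norm_eq_abs] at h3
    exact_mod_cast h3

end Bound
end

noncomputable section
open Matrix Polynomial

/-- The real eigenvalues `λ > 1` that are algebraic integers, of matrices in
`O(f, ℚ(√5))`, are bounded away from `1`. -/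
theorem integral_eigenvalues_bounded_away_from_one :
    ∃ ε > (0 : ℝ), ∀ g : GL (Fin 5) ℝ,
      (↑g : Matrix (Fin 5) (Fin 5) ℝ)ᵀ * Jphi * (↑g : Matrix (Fin 5) (Fin 5) ℝ) = Jphi →
      (∀ i j, (↑g : Matrix (Fin 5) (Fin 5) ℝ) i j ∈ Qsqrt5) →
      ∀ lam : ℝ, 1 < lam →
        ((↑g : Matrix (Fin 5) (Fin 5) ℝ) - lam • 1).det = 0 →
        IsIntegral ℤ lam →
        1 + ε ≤ lam := by
  classical
  set T : Set ℝ :=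
    (⋃ (f : Polynomial ℤ) (_ : f.natDegree ≤ 10 ∧
        ∀ i, f.coeff i ∈ Set.Icc (-258048 : ℤ) 258048),
      ((f.map (algebraMap ℤ ℝ)).roots.toFinset : Set ℝ)) with hT
  have hTfin : T.Finite :=
    Polynomial.bUnion_roots_finite (algebraMap ℤ ℝ) 10 (Set.finite_Icc _ _)
  set T' : Set ℝ := T ∩ Set.Ioi 1 with hT'
  have hT'fin : T'.Finite := hTfin.inter_of_left _
  have key : ∀ gm : Matrix (Fin 5) (Fin 5) ℝ, gmᵀ * Jphi * gm = Jphi →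
      (∀ i j, gm i j ∈ Qsqrt5) → ∀ lam : ℝ, 1 < lam → lam ≤ 2 →
      (gm - lam • 1).det = 0 → IsIntegral ℤ lam → lam ∈ T' := by
    intro gm hrel hQ lam hlam hlam2 hdet hint
    obtain ⟨hdeg, hcoeff⟩ := minpoly_bdd hQ hrel hlam hlam2 hdet hint
    constructor
    · rw [hT]
      refine Set.mem_iUnion.2 ⟨minpoly ℤ lam, Set.mem_iUnion.2
        ⟨⟨hdeg, fun i => Set.mem_Icc.2 (abs_le.1 (hcoeff i))⟩, ?_⟩⟩
      have hne : (minpoly ℤ lam).map (algebraMap ℤ ℝ) ≠ 0 :=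
        ((minpoly.monic hint).map (algebraMap ℤ ℝ)).ne_zero
      simp only [Finset.coe_sort_coe, Finset.mem_coe, Multiset.mem_toFinset]
      rw [Polynomial.mem_roots hne]
      show Polynomial.eval lam ((minpoly ℤ lam).map (algebraMap ℤ ℝ)) = 0
      rw [Polynomial.eval_map, ← Polynomial.aeval_def]
      exact minpoly.aeval ℤ lam
    · exact hlam
  by_cases hne : T'.Nonempty
  · have hmin : sInf T' ∈ T' := Set.Nonempty.csInf_mem hne hT'fin
    have h1 : 1 < sInf T' := hmin.2
    refine ⟨min 1 (sInf T' - 1), lt_min one_pos (by linarith), ?_⟩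
    intro g hrel hQ lam hlam hdet hint
    by_cases h2 : lam ≤ 2
    · have hm : lam ∈ T' := key _ hrel hQ lam hlam h2 hdet hint
      have h3 : sInf T' ≤ lam := csInf_le hT'fin.bddBelow hm
      have h4 : min 1 (sInf T' - 1) ≤ sInf T' - 1 := min_le_right _ _
      linarith
    · push_neg at h2
      have h4 : min 1 (sInf T' - 1) ≤ 1 := min_le_left _ _
      linarith
  · refine ⟨1, one_pos, ?_⟩
    intro g hrel hQ lam hlam hdet hint
    by_cases h2 : lam ≤ 2
    · exact absurd ⟨lam, key _ hrel hQ lam hlam h2 hdet hint⟩ hne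
    · linarith

end
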